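/- arXiv:2510.01343 — 6 statements merged into one kernel-verified Lean document; each statement's English description precedes it below -/
import Mathlib

section
/- Let λ ∈ ℤ^m with λ_1 ≥ ⋯ ≥ λ_m ≥ 0 and let δ = (m,m−1,...,1). For S ⊆ [m], let ι_λ(S) be the tuple obtained from λ+δ by negating the entries in positions indexed by S. Then the permutation sorting ι_λ(S) into strictly decreasing order has sign (−1)^{m|S| + Σ(S)}, where Σ(S) is the sum of the elements of S. -/
/-!
Write `a = λ + δ`, strictly decreasing and positive. For positions `v < u` we have
`0 < a_u < a_v`, so after negating the entries in `S` the pair is out of order exactly when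
`v ∈ S`, whatever happens to `u`. Hence `σ⁻¹` has `∑_{v ∈ S} (m - 1 - v)` inversions
(0-indexed `v`), and `m - 1 - v ≡ m + (v + 1) (mod 2)`.
-/

open Finset

theorem ite_neg_lt_ite_neg_iff {α : Type*} [AddCommGroup α] [LinearOrder α]
    [IsOrderedAddMonoid α] {a b : α} (hb : 0 < b) (hba : b < a) (p q : Prop)
    [Decidable p] [Decidable q] :
    ((if p then -a else a) < if q then -b else b) ↔ p := by
  have hnb : -b < b := neg_lt_self hb
  split_ifs with hp hq hq
  · exact iff_of_true (neg_lt_neg hba) hp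
  · exact iff_of_true ((neg_lt_neg hba).trans hnb) hp
  · exact iff_of_false (not_lt.2 (hnb.trans hba).le) hp
  · exact iff_of_false (not_lt.2 hba.le) hp

theorem neg_one_pow_sub_one_sub {M : Type*} [Monoid M] [HasDistribNeg M] {n k : ℕ}
    (hk : k < n) : (-1 : M) ^ (n - 1 - k) = (-1) ^ (n + (k + 1)) := by
  rw [show n + (k + 1) = n - 1 - k + 2 * (k + 1) by omega, pow_add, pow_mul, neg_one_sq,
    one_pow, mul_one]

namespace Equiv.Perm

theorem sign_eq_neg_one_pow_sum_of_lt_iff_mem {n : ℕ} (f : Perm (Fin n)) (S : Finset (Fin n))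
    (hf : ∀ u v : Fin n, v < u → (f u < f v ↔ v ∈ S)) :
    sign f = (-1) ^ ∑ v ∈ S, (n - 1 - v : ℕ) := by
  have hrow : ∀ v : Fin n, (∏ u ∈ Ioi v, if f v < f u then (1 : ℤˣ) else -1) =
      if v ∈ S then (-1) ^ (n - 1 - v : ℕ) else 1 := by
    intro v
    have hpair : ∀ u ∈ Ioi v,
        (if f v < f u then (1 : ℤˣ) else -1) = if v ∈ S then -1 else 1 := by
      intro u hu
      have hne : f v ≠ f u := f.injective.ne (mem_Ioi.1 hu).ne
      have hinv := hf u v (mem_Ioi.1 hu)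
      by_cases hv : v ∈ S
      · rw [if_pos hv, if_neg (hinv.2 hv).asymm]
      · rw [if_neg hv, if_pos ((not_lt.1 (mt hinv.1 hv)).lt_of_ne hne)]
    rw [prod_congr rfl hpair, prod_const, Fin.card_Ioi, ite_pow, one_pow]
  rw [sign_eq_prod_prod_Ioi, prod_congr rfl fun v _ => hrow v, prod_ite_mem, univ_inter,
    prod_pow_eq_pow_sum]

theorem sign_eq_of_strictAnti_ite_neg {α : Type*} [AddCommGroup α] [LinearOrder α]
    [IsOrderedAddMonoid α] {n : ℕ} {a : Fin n → α} (ha : StrictAnti a) (hpos : ∀ j, 0 < a j)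
    (S : Finset (Fin n)) {σ : Perm (Fin n)}
    (hσ : StrictAnti fun j => if σ j ∈ S then -a (σ j) else a (σ j)) :
    sign σ = (-1) ^ ∑ v ∈ S, (n - 1 - v : ℕ) := by
  rw [← sign_inv]
  refine σ⁻¹.sign_eq_neg_one_pow_sum_of_lt_iff_mem S fun u v hvu => ?_
  rw [← hσ.lt_iff_gt]
  simp only [coe_inv, apply_symm_apply]
  exact ite_neg_lt_ite_neg_iff (hpos u) (ha hvu) _ _

end Equiv.Perm

/-- Sign of the sorting permutation: let `λ + δ` (with `δ = (m,…,1)`) have strictly decreasing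
positive entries and let `ι_λ(S)` negate the entries in positions of `S`. Any permutation `σ`
rearranging `ι_λ(S)` into strictly decreasing order has sign `(−1)^{m|S| + Σ(S)}` (with `Σ(S)`
the sum of the 1-indexed positions in `S`). -/
theorem stmt6 (m : ℕ) (lam : Fin m → ℤ)
    (ha : StrictAnti fun j : Fin m => lam j + ((m : ℤ) - (j : ℕ)))
    (hpos : ∀ j : Fin m, 0 < lam j + ((m : ℤ) - (j : ℕ)))
    (S : Finset (Fin m)) (σ : Equiv.Perm (Fin m))
    (hσ : StrictAnti fun j : Fin m =>
      if σ j ∈ S then -(lam (σ j) + ((m : ℤ) - ((σ j : ℕ))))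
      else lam (σ j) + ((m : ℤ) - ((σ j : ℕ)))) :
    Equiv.Perm.sign σ = (-1 : ℤˣ) ^ (m * S.card + ∑ s ∈ S, ((s : ℕ) + 1)) := by
  rw [Equiv.Perm.sign_eq_of_strictAnti_ite_neg ha hpos S hσ, ← prod_pow_eq_pow_sum,
    prod_congr rfl fun v _ => neg_one_pow_sub_one_sub v.isLt, prod_pow_eq_pow_sum,
    sum_add_distrib, sum_const, smul_eq_mul, mul_comm]
end

section
/- With notation as in the previous statement, the sign of the permutation sorting ι_λ(S^inv) is (−1)^{|S| + Σ(S)}, where S^inv = {m+1−s : s ∈ S}. -/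
/-!
Write `μ j = λ j + m - j` and `T = S^inv`. The sorted sequence is `v ∘ σ`, where `v` negates
`μ` on `T`. Since `v ∘ σ` is decreasing, `sign σ` is `(-1)` to the number of pairs `i < j` with
`v i < v j`. As `μ` is positive and decreasing, such a pair is exactly one with `i ∈ T`, so the
exponent is `∑_{t ∈ T} (m - 1 - t) = ∑_{s ∈ S} s`, which has the parity of `|S| + Σ(S)`.
-/

open Finset

theorem Equiv.Perm.sign_eq_prod_prod_Ioi_of_strictAnti {n : ℕ} {α : Type*} [LinearOrder α]
    (v : Fin n → α) (σ : Equiv.Perm (Fin n)) (hσ : StrictAnti (v ∘ σ)) :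
    σ.sign = ∏ i, ∏ j ∈ Ioi i, (if v j < v i then 1 else -1) := by
  rw [← σ.sign_inv, σ⁻¹.sign_eq_prod_prod_Ioi]
  refine prod_congr rfl fun i _ => prod_congr rfl fun j _ => ?_
  have hlt : v j < v i ↔ σ⁻¹ i < σ⁻¹ j := by
    simpa using hσ.lt_iff_gt (a := σ⁻¹ j) (b := σ⁻¹ i)
  simp only [hlt]

theorem Finset.piecewise_neg_lt_piecewise_neg_iff {ι α : Type*} [Preorder ι] [AddCommGroup α]
    [LinearOrder α] [IsOrderedAddMonoid α] [DecidableEq ι] {μ : ι → α} (hμ : StrictAnti μ)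
    (hpos : ∀ i, 0 < μ i) (T : Finset ι) {i j : ι} (hij : i < j) :
    T.piecewise (-μ) μ j < T.piecewise (-μ) μ i ↔ i ∉ T := by
  have hlt := hμ hij
  have hneg_i : -μ i < 0 := neg_neg_iff_pos.mpr (hpos i)
  have hneg_j : -μ j < 0 := neg_neg_iff_pos.mpr (hpos j)
  by_cases hi : i ∈ T <;> by_cases hj : j ∈ T <;>
    simp only [piecewise_eq_of_mem, piecewise_eq_of_notMem, Pi.neg_apply, hi, hj, not_true,
      not_false_iff, iff_true, iff_false, not_lt]
  · exact neg_le_neg hlt.le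
  · exact hneg_i.le.trans (hpos j).le
  · exact hneg_j.trans (hpos i)
  · exact hlt

theorem Fin.sum_card_Ioi_image_rev {n : ℕ} (S : Finset (Fin n)) :
    ∑ i ∈ S.image Fin.rev, #(Ioi i) = ∑ s ∈ S, (s : ℕ) := by
  rw [sum_image fun a _ b _ h => Fin.rev_injective h]
  refine sum_congr rfl fun s _ => ?_
  rw [Fin.card_Ioi, Fin.val_rev]
  omega

/-- Sign of the permutation sorting `ι_λ(S^inv)`, where `S^inv = {m+1−s : s ∈ S}`:
it equals `(−1)^{|S| + Σ(S)}`. -/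
theorem stmt7 (m : ℕ) (lam : Fin m → ℤ)
    (ha : StrictAnti fun j : Fin m => lam j + ((m : ℤ) - (j : ℕ)))
    (hpos : ∀ j : Fin m, 0 < lam j + ((m : ℤ) - (j : ℕ)))
    (S : Finset (Fin m)) (σ : Equiv.Perm (Fin m))
    (hσ : StrictAnti fun j : Fin m =>
      if σ j ∈ S.image Fin.rev then -(lam (σ j) + ((m : ℤ) - ((σ j : ℕ))))
      else lam (σ j) + ((m : ℤ) - ((σ j : ℕ)))) :
    Equiv.Perm.sign σ = (-1 : ℤˣ) ^ (S.card + ∑ s ∈ S, ((s : ℕ) + 1)) := by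
  set T := S.image Fin.rev
  set μ : Fin m → ℤ := fun j => lam j + ((m : ℤ) - (j : ℕ))
  have hv : StrictAnti (T.piecewise (-μ) μ ∘ σ) := hσ
  have hfactor : ∀ i, ∀ j ∈ Ioi i,
      (if T.piecewise (-μ) μ j < T.piecewise (-μ) μ i then (1 : ℤˣ) else -1) =
        if i ∈ T then -1 else 1 := fun i j hj => by
    rw [if_congr (piecewise_neg_lt_piecewise_neg_iff ha hpos T (mem_Ioi.mp hj)) rfl rfl, ite_not]
  calc σ.sign
      = ∏ i, (if i ∈ T then (-1 : ℤˣ) ^ #(Ioi i) else 1) := by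
        rw [σ.sign_eq_prod_prod_Ioi_of_strictAnti _ hv]
        refine prod_congr rfl fun i _ => ?_
        rw [prod_congr rfl (hfactor i), prod_const]
        split_ifs <;> simp
    _ = (-1) ^ ∑ s ∈ S, (s : ℕ) := by
        rw [prod_ite_mem, univ_inter, prod_pow_eq_pow_sum, Fin.sum_card_Ioi_image_rev]
    _ = (-1) ^ (S.card + ∑ s ∈ S, ((s : ℕ) + 1)) := by
        rw [sum_add_distrib, sum_const, smul_eq_mul, mul_one, add_comm, add_assoc, ← two_mul,
          pow_add, pow_mul]
        simp
end

section
/- Fix n ≥ k ≥ 1 and a vector space of formal solutions: if (u_i)_{i=0}^{q} with q = ⌈(n+k)/2⌉ satisfies u_i = 0 for i < q−k and ∑_{i=α}^q (−1)^i C(i,α) u_i = 0 for all α = 0,...,k−1, then u_i = C(k, q−i) · u_q for all i. -/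
/-!
Encode `u` as `p = ∑_{i ≤ q} u_i X^i`. The `α`-th alternating sum is, up to the sign `(-1)^α`,
the `α`-th coefficient of `p(X - 1)`, so the hypotheses say `X^k ∣ p(X - 1)`, i.e. `(X + 1)^k ∣ p`.
The vanishing of `u_i` for `i < q - k` says `X^(q-k) ∣ p`. As `p` has degree at most `q`, it is a
constant multiple of `X^(q-k) (X + 1)^k`, whose coefficients are the binomial coefficients
`C(k, q - i)`; comparing the coefficients at `q` identifies the constant as `u_q`.
-/

open Finset Polynomial

namespace Polynomial

variable {R : Type*} [CommRing R]

theorem coeff_taylor_neg_one_sum_C_mul_X_pow (u : ℕ → R) (N α : ℕ) :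
    (taylor (-1) (∑ i ∈ range N, C (u i) * X ^ i)).coeff α =
      (-1) ^ α * ∑ i ∈ range N, (-1) ^ i * i.choose α * u i := by
  simp only [map_sum, taylor_mul, taylor_C, taylor_X_pow, finsetSum_coeff, coeff_C_mul,
    coeff_X_add_C_pow, mul_sum]
  refine sum_congr rfl fun i _ ↦ ?_
  rcases lt_or_ge i α with hi | hi
  · simp [Nat.choose_eq_zero_of_lt hi]
  · obtain ⟨j, rfl⟩ := Nat.exists_eq_add_of_le hi
    have hsq : (-1 : R) ^ α * (-1) ^ α = 1 := by rw [← mul_pow]; simp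
    rw [Nat.add_sub_cancel_left, pow_add]
    linear_combination (-(u (α + j) * ((α + j).choose α) * (-1) ^ j)) * hsq

theorem X_add_one_pow_dvd_of_alternating_sums_eq_zero (u : ℕ → R) (N k : ℕ)
    (h : ∀ α < k, ∑ i ∈ range N, (-1) ^ i * i.choose α * u i = 0) :
    (X + 1) ^ k ∣ ∑ i ∈ range N, C (u i) * X ^ i := by
  have hdvd : X ^ k ∣ taylor (-1) (∑ i ∈ range N, C (u i) * X ^ i) :=
    X_pow_dvd_iff.mpr fun α hα ↦ by
      rw [coeff_taylor_neg_one_sum_C_mul_X_pow, h α hα, mul_zero]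
  simpa [taylor_taylor] using _root_.map_dvd (taylorAlgHom (1 : R)) hdvd

theorem coeff_sum_C_mul_X_pow (u : ℕ → R) {N i : ℕ} (hi : i < N) :
    (∑ j ∈ range N, C (u j) * X ^ j).coeff i = u i := by
  simp [coeff_X_pow, hi]

theorem natDegree_sum_C_mul_X_pow_le (u : ℕ → R) (N : ℕ) :
    (∑ i ∈ range (N + 1), C (u i) * X ^ i).natDegree ≤ N :=
  natDegree_sum_le_of_forall_le _ _ fun _ hi ↦
    (natDegree_C_mul_X_pow_le _ _).trans (Nat.lt_succ_iff.mp (mem_range.mp hi))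

theorem coeff_X_pow_mul_X_add_one_pow (m k : ℕ) {i : ℕ} (hi : i ≤ m + k) :
    (X ^ m * (X + 1) ^ k : R[X]).coeff i = k.choose (m + k - i) := by
  rw [coeff_X_pow_mul', coeff_X_add_one_pow]
  split_ifs with hm
  · rw [← Nat.choose_symm (by omega : i - m ≤ k)]
    congr 2; omega
  · rw [Nat.choose_eq_zero_of_lt (by omega), Nat.cast_zero]

theorem eq_C_mul_X_pow_mul_X_add_one_pow {p : R[X]} {m k : ℕ} (hdeg : p.natDegree ≤ m + k)
    (hX : X ^ m ∣ p) (h1 : (X + 1) ^ k ∣ p) :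
    p = C (p.coeff (m + k)) * (X ^ m * (X + 1) ^ k) := by
  nontriviality R
  have hcop : IsCoprime (X ^ m : R[X]) ((X + 1) ^ k) :=
    IsCoprime.pow ⟨-1, 1, by ring⟩
  have hmonic : (X ^ m * (X + 1) ^ k : R[X]).Monic := by
    simpa using (monic_X_pow m).mul ((monic_X_add_C (1 : R)).pow k)
  have hnatDeg : (X ^ m * (X + 1) ^ k : R[X]).natDegree = m + k := by
    rw [mul_comm, ← C_1, natDegree_mul_X_pow, natDegree_pow_X_add_C, add_comm]
    exact ((monic_X_add_C 1).pow k).ne_zero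
  have hp := eq_leadingCoeff_mul_of_monic_of_dvd_of_natDegree_le hmonic (hcop.mul_dvd hX h1)
    (hnatDeg ▸ hdeg)
  have hlc : p.coeff (m + k) = p.leadingCoeff := by
    conv_lhs => rw [hp]
    rw [coeff_C_mul, ← hnatDeg, hmonic.coeff_natDegree, mul_one]
  rwa [hlc]

end Polynomial

theorem stmt9_general (n k : ℕ) (hkn : k ≤ n) (u : ℕ → ℚ)
    (hu0 : ∀ i < (n + k + 1) / 2 - k, u i = 0)
    (hlin : ∀ α < k, ∑ i ∈ Finset.range ((n + k + 1) / 2 + 1),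
      (-1 : ℚ) ^ i * (i.choose α) * u i = 0) :
    ∀ i ≤ (n + k + 1) / 2,
      u i = (k.choose ((n + k + 1) / 2 - i)) * u ((n + k + 1) / 2) := by
  set q := (n + k + 1) / 2
  have hq : q - k + k = q := by omega
  set p : ℚ[X] := ∑ i ∈ range (q + 1), C (u i) * X ^ i
  have hcoeff : ∀ i ≤ q, p.coeff i = u i := fun i hi ↦ coeff_sum_C_mul_X_pow u (by omega)
  have hX : X ^ (q - k) ∣ p :=
    X_pow_dvd_iff.mpr fun i hi ↦ by rw [hcoeff i (by omega), hu0 i hi]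
  have hp := eq_C_mul_X_pow_mul_X_add_one_pow (by rw [hq]; exact natDegree_sum_C_mul_X_pow_le u q)
    hX (X_add_one_pow_dvd_of_alternating_sums_eq_zero u (q + 1) k hlin)
  intro i hi
  rw [← hcoeff i hi, hp, coeff_C_mul, coeff_X_pow_mul_X_add_one_pow _ _ (by omega), hq,
    hcoeff q le_rfl, mul_comm]

/-- Uniqueness of solutions: if `q = ⌈(n+k)/2⌉`, `u_i = 0` for `i < q−k`, and
`∑_{i=α}^q (−1)^i C(i,α) u_i = 0` for `α = 0,…,k−1`, then `u_i = C(k,q−i)·u_q` for all `i ≤ q`. -/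
theorem stmt9 (n k : ℕ) (hk1 : 1 ≤ k) (hkn : k ≤ n) (u : ℕ → ℚ)
    (hu0 : ∀ i < (n + k + 1) / 2 - k, u i = 0)
    (hlin : ∀ α < k, ∑ i ∈ Finset.range ((n + k + 1) / 2 + 1),
      (-1 : ℚ) ^ i * (i.choose α) * u i = 0) :
    ∀ i ≤ (n + k + 1) / 2,
      u i = (k.choose ((n + k + 1) / 2 - i)) * u ((n + k + 1) / 2) :=
  stmt9_general n k hkn u hu0 hlin
end

section
/- Let n ≥ k and let A(x;t) be the (n+k)×(n+k) matrix with entries A_{i,j} = (−t)^{j−1} x_i^{λ_j+n+k−j} for 1 ≤ i ≤ n and A_{i,j} = x_{i−n}^{λ_j+n+k−j} for n < i ≤ n+k, where λ ∈ ℤ^{n+k}. Then det A(x;t) is divisible by (1+t)^k in the ring ℤ[x_1^{±1},...,x_n^{±1}][t]. Specifically, subtracting row i from row n+i for i = 1,...,k shows det A(x;t) = (1+t)^k det A'(x;t), where A'_{n+i,j} = (∑_{r=0}^{j−2} (−t)^r) x_i^{λ_j+n+k−j}. -/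
open Polynomial

/-- The matrix `A(x;t)`: entry `(−t)^{j−1} x_i^{λ_j+n+k−j}` in the top `n` rows,
and `x_{i−n}^{λ_j+n+k−j}` in the bottom `k` rows (1-indexed; here 0-indexed). -/
noncomputable def typeAMat {R : Type*} [CommRing R] (n k : ℕ) (hk : k ≤ n)
    (x : Fin n → Rˣ) (lam : Fin (n + k) → ℤ) :
    Matrix (Fin (n + k)) (Fin (n + k)) (Polynomial R) :=
  Matrix.of fun i j =>
    if h : (i : ℕ) < n then
      (-X) ^ (j : ℕ) *
        C ((x ⟨i, h⟩ ^ (lam j + ((n + k - 1 - (j : ℕ) : ℕ) : ℤ)) : Rˣ) : R)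
    else
      C ((x ⟨(i : ℕ) - n, by have := i.isLt; omega⟩ ^
          (lam j + ((n + k - 1 - (j : ℕ) : ℕ) : ℤ)) : Rˣ) : R)

/-- The matrix `A'(x;t)`: same top rows, but bottom entries carry `∑_{r=0}^{j−2} (−t)^r`. -/
noncomputable def typeAMat' {R : Type*} [CommRing R] (n k : ℕ) (hk : k ≤ n)
    (x : Fin n → Rˣ) (lam : Fin (n + k) → ℤ) :
    Matrix (Fin (n + k)) (Fin (n + k)) (Polynomial R) :=
  Matrix.of fun i j =>
    if h : (i : ℕ) < n then
      (-X) ^ (j : ℕ) *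
        C ((x ⟨i, h⟩ ^ (lam j + ((n + k - 1 - (j : ℕ) : ℕ) : ℤ)) : Rˣ) : R)
    else
      (∑ r ∈ Finset.range (j : ℕ), (-X) ^ r) *
        C ((x ⟨(i : ℕ) - n, by have := i.isLt; omega⟩ ^
            (lam j + ((n + k - 1 - (j : ℕ) : ℕ) : ℤ)) : Rˣ) : R)

/-!
Subtracting row `i` from row `n + i` (for `i < k`) turns the bottom entry `x_i^{λ_j+n+k−j}` into
`(1 − (−t)^{j−1}) x_i^{λ_j+n+k−j} = (1 + t) ∑_{r<j−1} (−t)^r x_i^{λ_j+n+k−j}`, so `1 + t` factors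
out of each of the `k` bottom rows. In matrix form `A = L A'`, where `L` is lower triangular with
diagonal `(1, …, 1, 1 + t, …, 1 + t)` and ones at the positions `(n + i, i)`.
-/

namespace Matrix

variable {R : Type*} [CommRing R] {n k : ℕ}

def shiftRowsMat (n k : ℕ) (c : R) : Matrix (Fin (n + k)) (Fin (n + k)) R :=
  of fun i j => if i = j then (if (i : ℕ) < n then 1 else c) else if (i : ℕ) = j + n then 1 else 0

lemma shiftRowsMat_isLowerTriangular (c : R) : (shiftRowsMat n k c).IsLowerTriangular := by
  intro i j hij
  have hij : (i : ℕ) < j := hij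
  simp [shiftRowsMat, Fin.ne_of_lt hij, show (i : ℕ) ≠ j + n by omega]

lemma det_shiftRowsMat (c : R) : (shiftRowsMat n k c).det = c ^ k := by
  rw [det_of_isLowerTriangular _ (shiftRowsMat_isLowerTriangular c), Fin.prod_univ_add]
  simp [shiftRowsMat]

lemma det_eq_pow_mul_det_of_rows_eq_smul_add (hk : k ≤ n)
    (M N : Matrix (Fin (n + k)) (Fin (n + k)) R) (c : R)
    (htop : ∀ i : Fin (n + k), (i : ℕ) < n → M i = N i)
    (hbot : ∀ i j : Fin (n + k), (i : ℕ) = j + n → M i = c • N i + N j) :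
    M.det = c ^ k * N.det := by
  suffices M = shiftRowsMat n k c * N by rw [this, det_mul, det_shiftRowsMat]
  ext i m
  rw [mul_apply]
  by_cases hi : (i : ℕ) < n
  · rw [htop i hi, Fintype.sum_eq_single i fun l hl => ?_]
    · simp [shiftRowsMat, hi]
    · have hil : (i : ℕ) ≠ l + n := by omega
      simp [shiftRowsMat, Ne.symm hl, hil]
  · let j : Fin (n + k) := ⟨i - n, by omega⟩
    have hij : (i : ℕ) = j + n := by simp [j]; omega
    have hne : i ≠ j := fun h => by have := congrArg Fin.val h; have := i.isLt; omega
    rw [hbot i j hij, Fintype.sum_eq_add i j hne fun l ⟨hli, hlj⟩ => ?_]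
    · simp [shiftRowsMat, hij, hne]
    · have hil : (i : ℕ) ≠ l + n := fun h => hlj (by ext; omega)
      simp [shiftRowsMat, Ne.symm hli, hil]

end Matrix

lemma one_add_mul_geom_sum_neg_add_pow {A : Type*} [Ring A] (a : A) (m : ℕ) :
    (1 + a) * ∑ r ∈ Finset.range m, (-a) ^ r + (-a) ^ m = 1 := by
  rw [← sub_neg_eq_add 1 a, mul_neg_geom_sum, sub_add_cancel]

section typeAMat

variable {R : Type*} [CommRing R] {n k : ℕ} (hk : k ≤ n) (x : Fin n → Rˣ) (lam : Fin (n + k) → ℤ)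

lemma typeAMat_row_of_lt {i : Fin (n + k)} (hi : (i : ℕ) < n) :
    typeAMat n k hk x lam i = typeAMat' n k hk x lam i := by
  ext m
  simp [typeAMat, typeAMat', hi]

lemma typeAMat_row_eq_smul_add {i j : Fin (n + k)} (hij : (i : ℕ) = j + n) :
    typeAMat n k hk x lam i =
      (1 + X : R[X]) • typeAMat' n k hk x lam i + typeAMat' n k hk x lam j := by
  ext m
  have hj : (j : ℕ) < n := by omega
  have hx : x ⟨(i : ℕ) - n, by omega⟩ = x ⟨j, hj⟩ := congrArg x (Fin.ext (by simp; omega))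
  simp only [typeAMat, typeAMat', Matrix.of_apply, Pi.add_apply, Pi.smul_apply, smul_eq_mul,
    dif_neg (show ¬ (i : ℕ) < n by omega), dif_pos hj, hx]
  rw [← mul_assoc, ← add_mul, one_add_mul_geom_sum_neg_add_pow, one_mul]

end typeAMat

/-- `det A(x;t) = (1+t)^k · det A'(x;t)`; in particular `(1+t)^k` divides `det A(x;t)`. -/
theorem stmt12 {R : Type*} [CommRing R] (n k : ℕ) (hk : k ≤ n)
    (x : Fin n → Rˣ) (lam : Fin (n + k) → ℤ) :
    (typeAMat n k hk x lam).det = (1 + X) ^ k * (typeAMat' n k hk x lam).det ∧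
    (1 + X) ^ k ∣ (typeAMat n k hk x lam).det := by
  have hdet : (typeAMat n k hk x lam).det = (1 + X) ^ k * (typeAMat' n k hk x lam).det :=
    Matrix.det_eq_pow_mul_det_of_rows_eq_smul_add hk _ _ _
      (fun _ hi => typeAMat_row_of_lt hk x lam hi)
      (fun _ _ hij => typeAMat_row_eq_smul_add hk x lam hij)
  exact ⟨hdet, _, hdet⟩
end

section
/- Type C hook lemma: fix m and for S ⊆ [m] define β_0(S) as follows: set δ = (m, m−1, ..., 1); negate the entries of δ in positions S, sort the result into weakly decreasing order, and subtract δ. Then the partition −β_0(S)^op (the reverse of β_0(S), negated) equals the nested union of hooks ⋃_{i∈S} h(m+1−i), where h(j) = (j+1, 1^{j−1}) and the nested union is the union of diagonal hooks obtained by placing the hooks h(m+1−i), i ∈ S, nested along the main diagonal. Equivalently, writing S = {s_1 < ⋯ < s_k} and S^c = {s'_1 < ⋯ < s'_{m−k}}, one has −β_0(S)^op = (m+2−s_1, m+3−s_2, ..., m+k+1−s_k, s'_{m−k} − (m−k), ..., s'_1 − 1). -/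
/-- `ι_0(S)`: the tuple `δ = (m, m−1, …, 1)` with the entries in positions of `S` negated
(0-indexed: `δ_j = m − j`). -/
def iota0 (m : ℕ) (S : Finset (Fin m)) : Fin m → ℤ :=
  fun j => if j ∈ S then -((m : ℤ) - (j : ℕ)) else ((m : ℤ) - (j : ℕ))

/-- The explicit tuple `g = −β_0(S)^op`: writing `S = {s_1 < ⋯ < s_k}` and
`S^c = {s'_1 < ⋯ < s'_{m−k}}` (1-indexed values), `g = (m+2−s_1, …, m+k+1−s_k,
s'_{m−k}−(m−k), …, s'_1−1)`. -/
def gTuple (m : ℕ) (S : Finset (Fin m)) : Fin m → ℤ :=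
  fun i =>
    if h : (i : ℕ) < S.card then
      (m : ℤ) + 2 + (i : ℕ) - (((S.orderIsoOfFin rfl ⟨(i : ℕ), h⟩ : Fin m) : ℕ) + 1)
    else
      (((Sᶜ.orderIsoOfFin (by rw [Finset.card_compl, Fintype.card_fin])
            ⟨m - 1 - (i : ℕ),
              by have h1 := i.isLt
                 have h2 : S.card ≤ m := by simpa using S.card_le_univ
                 omega⟩
          : Fin m) : ℕ) + 1 : ℤ)
        - ((m : ℤ) - (i : ℕ))

lemma card_le_aux (m : ℕ) (S : Finset (Fin m)) : S.card ≤ m := by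
  simpa using S.card_le_univ

lemma compl_card_aux (m : ℕ) (S : Finset (Fin m)) : Sᶜ.card = m - S.card := by
  rw [Finset.card_compl, Fintype.card_fin]

/-- The permutation matching positions to corresponding elements. -/
def eFun (m : ℕ) (S : Finset (Fin m)) (j : Fin m) : Fin m :=
  if h : (j : ℕ) < m - S.card then
    (Sᶜ.orderIsoOfFin (compl_card_aux m S) ⟨(j : ℕ), h⟩ : Fin m)
  else
    (S.orderIsoOfFin rfl ⟨m - 1 - (j : ℕ),
      by have h1 := j.isLt; have h2 := card_le_aux m S; omega⟩ : Fin m)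

lemma f_eq (m : ℕ) (S : Finset (Fin m)) (j : Fin m) :
    ((m : ℤ) - (j : ℕ)) - gTuple m S (Fin.rev j) = iota0 m S (eFun m S j) := by
  have h1 := j.isLt
  have h2 := card_le_aux m S
  have hrev : ((Fin.rev j : Fin m) : ℕ) = m - 1 - (j : ℕ) := by
    rw [Fin.val_rev]; omega
  unfold gTuple eFun iota0
  by_cases h : (j : ℕ) < m - S.card
  · have h' : ¬ ((Fin.rev j : Fin m) : ℕ) < S.card := by rw [hrev]; omega
    rw [dif_pos h, dif_neg h']
    have hidx : (⟨m - 1 - ((Fin.rev j : Fin m) : ℕ), by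
        rw [Fin.val_rev]; omega⟩ : Fin (m - S.card)) =
        ⟨(j : ℕ), h⟩ := by
      apply Fin.ext; simp only [hrev]; omega
    rw [hidx]
    set x : Fin m := (Sᶜ.orderIsoOfFin (compl_card_aux m S) ⟨(j : ℕ), h⟩ : Fin m) with hx
    have hxmem : x ∉ S := by
      have := (Sᶜ.orderIsoOfFin (compl_card_aux m S) ⟨(j : ℕ), h⟩).2
      rw [← hx] at this
      exact Finset.mem_compl.mp this
    rw [if_neg hxmem, hrev]
    omega
  · have h' : ((Fin.rev j : Fin m) : ℕ) < S.card := by rw [hrev]; omega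
    rw [dif_neg h, dif_pos h']
    have hidx : (⟨((Fin.rev j : Fin m) : ℕ), h'⟩ : Fin (S.card)) =
        ⟨m - 1 - (j : ℕ), by omega⟩ := by
      apply Fin.ext; simp only [hrev]
    rw [hidx]
    set x : Fin m := (S.orderIsoOfFin rfl ⟨m - 1 - (j : ℕ), by omega⟩ : Fin m) with hx
    have hxmem : x ∈ S := by
      have := (S.orderIsoOfFin rfl ⟨m - 1 - (j : ℕ), by omega⟩).2
      rw [← hx] at this; exact this
    rw [if_pos hxmem, hrev]
    omega

lemma eFun_inj (m : ℕ) (S : Finset (Fin m)) : Function.Injective (eFun m S) := by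
  intro a b hab
  have ha1 := a.isLt
  have hb1 := b.isLt
  have h2 := card_le_aux m S
  unfold eFun at hab
  by_cases ha : (a : ℕ) < m - S.card <;> by_cases hb : (b : ℕ) < m - S.card
  · rw [dif_pos ha, dif_pos hb] at hab
    have := (Sᶜ.orderIsoOfFin (compl_card_aux m S)).injective
      (Subtype.coe_injective hab)
    have := Fin.mk.injEq .. ▸ this
    exact Fin.ext (by simpa using this)
  · rw [dif_pos ha, dif_neg hb] at hab
    exfalso
    have h1 := (Sᶜ.orderIsoOfFin (compl_card_aux m S) ⟨(a : ℕ), ha⟩).2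
    have h2' := (S.orderIsoOfFin rfl ⟨m - 1 - (b : ℕ), by omega⟩).2
    rw [hab] at h1
    exact Finset.mem_compl.mp h1 h2'
  · rw [dif_neg ha, dif_pos hb] at hab
    exfalso
    have h1 := (Sᶜ.orderIsoOfFin (compl_card_aux m S) ⟨(b : ℕ), hb⟩).2
    have h2' := (S.orderIsoOfFin rfl ⟨m - 1 - (a : ℕ), by omega⟩).2
    rw [← hab] at h1
    exact Finset.mem_compl.mp h1 h2'
  · rw [dif_neg ha, dif_neg hb] at hab
    have := (S.orderIsoOfFin rfl).injective (Subtype.coe_injective hab)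
    have := Fin.mk.injEq .. ▸ this
    exact Fin.ext (by omega)

/-- Type C hook lemma (explicit form): the weakly decreasing rearrangement of `ι_0(S)` is the
tuple `j ↦ δ_j − g_{m+1−j}`, i.e. `β_0(S) = −g^op` where `β_0(S)` is the sorted tuple minus
`δ`. Concretely: the tuple `j ↦ δ_j − g(rev j)` is weakly decreasing and has the same
multiset of entries as `ι_0(S)`. -/
theorem stmt18 (m : ℕ) (S : Finset (Fin m)) :
    (Antitone fun j : Fin m => ((m : ℤ) - (j : ℕ)) - gTuple m S (Fin.rev j))
    ∧ Finset.univ.val.map (iota0 m S) =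
        Finset.univ.val.map (fun j : Fin m => ((m : ℤ) - (j : ℕ)) - gTuple m S (Fin.rev j)) := by
  have h2 := card_le_aux m S
  constructor
  · intro a b hab
    simp only [f_eq]
    have ha1 := a.isLt
    have hb1 := b.isLt
    have hab' : (a : ℕ) ≤ (b : ℕ) := hab
    unfold eFun iota0
    by_cases ha : (a : ℕ) < m - S.card <;> by_cases hb : (b : ℕ) < m - S.card
    · rw [dif_pos ha, dif_pos hb]
      set xa := Sᶜ.orderIsoOfFin (compl_card_aux m S) ⟨(a : ℕ), ha⟩ with hxa
      set xb := Sᶜ.orderIsoOfFin (compl_card_aux m S) ⟨(b : ℕ), hb⟩ with hxb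
      have hmema : (xa : Fin m) ∉ S := Finset.mem_compl.mp xa.2
      have hmemb : (xb : Fin m) ∉ S := Finset.mem_compl.mp xb.2
      rw [if_neg hmema, if_neg hmemb]
      have hle : xa ≤ xb := by
        apply (Sᶜ.orderIsoOfFin (compl_card_aux m S)).monotone
        exact hab'
      have hle' : ((xa : Fin m) : ℕ) ≤ ((xb : Fin m) : ℕ) := hle
      omega
    · rw [dif_pos ha, dif_neg hb]
      set xa := Sᶜ.orderIsoOfFin (compl_card_aux m S) ⟨(a : ℕ), ha⟩ with hxa
      set xb := S.orderIsoOfFin rfl ⟨m - 1 - (b : ℕ), by omega⟩ with hxb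
      have hmema : (xa : Fin m) ∉ S := Finset.mem_compl.mp xa.2
      have hmemb : (xb : Fin m) ∈ S := xb.2
      rw [if_neg hmema, if_pos hmemb]
      have h3 := ((xa : Fin m)).isLt
      have h4 := ((xb : Fin m)).isLt
      omega
    · omega
    · rw [dif_neg ha, dif_neg hb]
      set xa := S.orderIsoOfFin rfl ⟨m - 1 - (a : ℕ), by omega⟩ with hxa
      set xb := S.orderIsoOfFin rfl ⟨m - 1 - (b : ℕ), by omega⟩ with hxb
      have hmema : (xa : Fin m) ∈ S := xa.2
      have hmemb : (xb : Fin m) ∈ S := xb.2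
      rw [if_pos hmema, if_pos hmemb]
      have hle : xb ≤ xa := by
        apply (S.orderIsoOfFin rfl).monotone
        show m - 1 - (b : ℕ) ≤ m - 1 - (a : ℕ)
        omega
      have hle' : ((xb : Fin m) : ℕ) ≤ ((xa : Fin m) : ℕ) := hle
      omega
  · have hmap : (Finset.univ.val.map fun j : Fin m =>
        ((m : ℤ) - (j : ℕ)) - gTuple m S (Fin.rev j))
        = Finset.univ.val.map (fun j => iota0 m S (eFun m S j)) :=
      Multiset.map_congr rfl (fun j _ => f_eq m S j)
    rw [hmap]
    let e : Fin m ≃ Fin m := Equiv.ofBijective (eFun m S)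
      ((Finite.injective_iff_bijective).mp (eFun_inj m S))
    have : Finset.univ.map e.toEmbedding = Finset.univ := Finset.map_univ_equiv e
    calc Finset.univ.val.map (iota0 m S)
        = (Finset.univ.map e.toEmbedding).val.map (iota0 m S) := by rw [this]
      _ = (Finset.univ.val.map (eFun m S)).map (iota0 m S) := rfl
      _ = Finset.univ.val.map (fun j => iota0 m S (eFun m S j)) := by
          rw [Multiset.map_map]; rfl
end

section
/- Type D determinant vanishing (equidistribution input): let m = 2n+ε with ε ∈ {0,1}, let λ+δ have distinct positive entries, and let z = (y_1,...,y_n, y_1^{−1},...,y_n^{−1}) if ε = 0, with an extra last coordinate 1 if ε = 1. For nonempty T ⊆ [m]_{1−ε}, let M(T) be the m×m matrix with entries M_{i,j} = z_i^{λ_j+δ_j} if j ∉ T ∪ [m]_ε, and M_{i,j} = z_i^{λ_j+δ_j} + z_i^{−(λ_j+δ_j)} if j ∈ T ∪ [m]_ε. Then det M(T) = 0. -/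
/-!
For `i < n` the rows `i` and `n + i` are built from `y i` and `(y i)⁻¹`, so they agree in every
column of the form `x ^ a + x ^ (-a)`, i.e. in all of `[m]_ε` and `T`. The remaining columns
number fewer than `n` since `T` is nonempty, so some nontrivial combination of the `n` row
differences vanishes there too: a linear dependence among the rows.
-/

open Finset

theorem not_linearIndependent_of_card_lt_of_eq_zero_off {κ ι F : Type*} [Fintype κ] [Field F]
    {v : κ → ι → F} {S : Finset ι} (hS : S.card < Fintype.card κ)
    (hv : ∀ i, ∀ j ∉ S, v i j = 0) : ¬ LinearIndependent F v := by
  have hres : ¬ LinearIndependent F (fun i (j : S) => v i j) := fun h => by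
    simpa [hS.not_ge] using h.fintype_card_le_finrank
  obtain ⟨c, hc, i, hi⟩ := Fintype.not_linearIndependent_iff.mp hres
  refine Fintype.not_linearIndependent_iff.mpr ⟨c, funext fun j => ?_, i, hi⟩
  by_cases hj : j ∈ S
  · simpa using congrFun hc ⟨j, hj⟩
  · simp [hv _ j hj]

theorem Matrix.det_eq_zero_of_rows_eq_off_of_card_lt {κ ι F : Type*} [Fintype κ] [Fintype ι]
    [DecidableEq ι] [Field F] {M : Matrix ι ι F} {r s : κ → ι}
    (hrs : Function.Injective (Sum.elim r s)) {S : Finset ι} (hS : S.card < Fintype.card κ)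
    (hM : ∀ i, ∀ j ∉ S, M (r i) j = M (s i) j) : M.det = 0 := by
  refine det_eq_zero_of_not_linearIndependent_rows fun hli => ?_
  obtain ⟨c, hc, i, hi⟩ := Fintype.not_linearIndependent_iff.mp <|
    not_linearIndependent_of_card_lt_of_eq_zero_off (v := fun i => M (r i) - M (s i)) hS
      fun i j hj => sub_eq_zero.mpr (hM i j hj)
  refine Fintype.not_linearIndependent_iff.mpr ⟨Sum.elim c (-c), ?_, .inl i, hi⟩
    (hli.comp _ hrs)
  simpa [Fintype.sum_sum_type, smul_sub, sub_eq_add_neg, sum_add_distrib] using hc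

theorem card_filter_mod_two_eq_le (n ε : ℕ) :
    #{j : Fin (2 * n + ε) | (j : ℕ) % 2 = ε} ≤ n := by
  calc #{j : Fin (2 * n + ε) | (j : ℕ) % 2 = ε} ≤ #(range n) :=
        card_le_card_of_injOn (fun j => (j : ℕ) / 2) (fun j hj => by simp at hj ⊢; omega)
          fun j₁ hj₁ j₂ hj₂ h => by simp at hj₁ hj₂ h; omega
    _ = n := card_range n

/-- Type D determinant vanishing: with `m = 2n+ε`, `z = (y_1,…,y_n,y_1^{−1},…,y_n^{−1}(,1))`,
and `λ+δ = a` having distinct positive entries, for nonempty `T ⊆ [m]_{1−ε}` the matrix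
`M(T)` with entries `z_i^{a_j}` (for `j ∉ T ∪ [m]_ε`) and `z_i^{a_j} + z_i^{−a_j}`
(for `j ∈ T ∪ [m]_ε`) has zero determinant. (0-indexed: `j ∈ [m]_{1−ε}` means `j % 2 = ε`,
and `j ∈ [m]_ε` means `j % 2 = 1 − ε`.) -/
theorem stmt19 {F : Type*} [Field F] (n ε : ℕ) (y : Fin n → Fˣ)
    (a : Fin (2 * n + ε) → ℤ)
    (T : Finset (Fin (2 * n + ε))) (hTne : T.Nonempty)
    (hT : ∀ j ∈ T, (j : ℕ) % 2 = ε) :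
    Matrix.det (Matrix.of fun i j : Fin (2 * n + ε) =>
      (fun zi : Fˣ =>
        if j ∈ T ∨ (j : ℕ) % 2 = 1 - ε then
          ((zi ^ a j : Fˣ) : F) + ((zi ^ (-a j) : Fˣ) : F)
        else ((zi ^ a j : Fˣ) : F))
      (if h : (i : ℕ) < n then y ⟨(i : ℕ), h⟩
        else if h2 : (i : ℕ) < 2 * n then (y ⟨(i : ℕ) - n, by omega⟩)⁻¹ else 1)) = 0 := by
  obtain ⟨t, ht⟩ := hTne
  have hε : ε ≤ 1 := hT t ht ▸ Nat.le_of_lt_succ (Nat.mod_lt _ two_pos)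
  set E : Finset (Fin (2 * n + ε)) := {j | (j : ℕ) % 2 = ε}
  have hTE : T ⊆ E := fun j hj => by simpa [E] using hT j hj
  have hS : #(E \ T) < Fintype.card (Fin n) := by
    have : #E ≤ n := card_filter_mod_two_eq_le n ε
    have := card_le_card hTE
    have := card_pos.mpr ⟨t, ht⟩
    rw [card_sdiff_of_subset hTE, Fintype.card_fin]
    omega
  have hrs : Function.Injective (Sum.elim (fun i : Fin n => (⟨i, by omega⟩ : Fin (2 * n + ε)))
      fun i : Fin n => ⟨n + i, by omega⟩) :=
    Function.Injective.sumElim (fun _ _ h => by simpa [Fin.ext_iff] using h)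
      (fun _ _ h => by simpa [Fin.ext_iff] using h) fun _ _ h => by simp [Fin.ext_iff] at h; omega
  refine Matrix.det_eq_zero_of_rows_eq_off_of_card_lt hrs hS fun i j hj => ?_
  have hsym : j ∈ T ∨ (j : ℕ) % 2 = 1 - ε := by
    by_contra! h
    exact hj (by simp [E, h.1]; omega)
  have hi : n + (i : ℕ) < 2 * n := by omega
  simp [hsym, hi, add_comm]
end
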